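/- For every j ∈ {1,…,c}, the map σ_j is a homotopy for multiplication by a_j on the Taylor complex: for every subset S ⊆ {1,…,r}, τ(σ_j(ε_S)) + σ_j(τ(ε_S)) = a_j · ε_S, i.e., τ ∘ σ_j + σ_j ∘ τ equals multiplication by a_j on each T_k. -/

import Mathlib

/-!
Expanding `τ σ ε_S + σ τ ε_S` gives terms `ε_{(S ∪ {t}) ∖ {s}}` with `t ∉ S`, `s ∈ S ∪ {t}`,
and `ε_{(S ∖ {s}) ∪ {t}}` with `s ∈ S`, `t ∉ S ∖ {s}`. The diagonal terms `s = t` return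
`f_t m_t ε_S`, which add up to `a ε_S`. The remaining terms are indexed by pairs `s ∈ S`, `t ∉ S`
and occur once in each sum, with the same monomial `m_t m_S / m_{(S ∖ {s}) ∪ {t}}` and opposite
signs, because inserting `t` shifts the position of `s` exactly when removing `s` does not shift
the position of `t`.
-/

open MvPolynomial

/-- The position `p_{t,S}` of `t` in `S ∪ {t}`: one plus the number of elements of `S`
smaller than `t`. -/
def taylorPos {r : ℕ} (S : Finset (Fin r)) (t : Fin r) : ℕ :=
  (S.filter fun s => s < t).card + 1

variable (𝕜 : Type*) [Field 𝕜] {n r : ℕ}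

/-- `m_S`: the lcm of the monomials `m_j = x^{v j}` for `j ∈ S` (equal to `1` when `S = ∅`). -/
noncomputable def taylorLcm (v : Fin r → (Fin n →₀ ℕ)) (S : Finset (Fin r)) :
    MvPolynomial (Fin n) 𝕜 :=
  monomial (S.sup v) 1

/-- The matrix entry of the Taylor differential: `(-1)^{k-i} m_S / m_{S∖{s}}`
(where `i = p_{s,S}` is the position of `s` in `S` and `k = |S|`). -/
noncomputable def taylorEntry (v : Fin r → (Fin n →₀ ℕ)) (S : Finset (Fin r)) (s : Fin r) :
    MvPolynomial (Fin n) 𝕜 :=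
  (-1) ^ (S.card - taylorPos S s) * monomial (S.sup v - (S.erase s).sup v) 1

/-- The matrix entry of the homotopy `σ`:
`(-1)^{k - p_{t,S} - 1} f_t m_t m_S / m_{S ∪ {t}}` (where `k = |S|`); the sign is written as
`(-1)^{k + p_{t,S} + 1}`, which agrees with `(-1)^{k - p_{t,S} - 1}` since the exponents have
the same parity. -/
noncomputable def htpyEntry (v : Fin r → (Fin n →₀ ℕ)) (f : Fin r → MvPolynomial (Fin n) 𝕜)
    (S : Finset (Fin r)) (t : Fin r) : MvPolynomial (Fin n) 𝕜 :=
  (-1) ^ (S.card + taylorPos S t + 1) *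
    (f t * monomial (v t + S.sup v - (insert t S).sup v) 1)

/-- The total module of the Taylor complex: the free `Q`-module with basis
`{ε_S : S ⊆ {1,…,r}}`; the basis element `ε_S` is `Finsupp.single S 1`. -/
abbrev TaylorModule (n r : ℕ) := Finset (Fin r) →₀ MvPolynomial (Fin n) 𝕜

/-- The Taylor differential `τ` on the total module,
`τ(ε_S) = Σ_{s ∈ S} (-1)^{|S| - p_{s,S}} (m_S / m_{S∖{s}}) ε_{S∖{s}}`. -/
noncomputable def taylorTau (v : Fin r → (Fin n →₀ ℕ)) :
    TaylorModule 𝕜 n r →ₗ[MvPolynomial (Fin n) 𝕜] TaylorModule 𝕜 n r :=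
  Finsupp.lsum (MvPolynomial (Fin n) 𝕜) fun S =>
    LinearMap.toSpanSingleton _ _
      (∑ s ∈ S, Finsupp.single (S.erase s) (taylorEntry 𝕜 v S s))

/-- The homotopy `σ` attached to a coefficient family `f` (with `a = Σ_j f_j m_j`):
`σ(ε_S) = Σ_{t ∉ S} (-1)^{|S| - p_{t,S} - 1} (f_t m_t m_S / m_{S∪{t}}) ε_{S∪{t}}`. -/
noncomputable def taylorHtpy (v : Fin r → (Fin n →₀ ℕ)) (f : Fin r → MvPolynomial (Fin n) 𝕜) :
    TaylorModule 𝕜 n r →ₗ[MvPolynomial (Fin n) 𝕜] TaylorModule 𝕜 n r :=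
  Finsupp.lsum (MvPolynomial (Fin n) 𝕜) fun S =>
    LinearMap.toSpanSingleton _ _
      (∑ t ∈ Sᶜ, Finsupp.single (insert t S) (htpyEntry 𝕜 v f S t))

open Finset

theorem neg_one_pow_mul_add_neg_one_pow_mul_of_odd {R : Type*} [Ring R] {a b : ℕ} {x y : R}
    (h : Odd (a + b)) (hxy : x = y) : (-1 : R) ^ a * x + (-1) ^ b * y = 0 := by
  subst hxy
  rcases Nat.even_or_odd a with ha | ha
  · rw [ha.neg_one_pow, (Nat.odd_add'.mp h |>.mpr ha).neg_one_pow, ← add_mul, add_neg_cancel,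
      zero_mul]
  · rw [ha.neg_one_pow, (Nat.odd_add.mp h |>.mp ha).neg_one_pow, ← add_mul, neg_add_cancel,
      zero_mul]

theorem Finset.sup_insert_le_add {α β : Type*} [DecidableEq β] [AddCommMonoid α]
    [SemilatticeSup α] [OrderBot α] [CanonicallyOrderedAdd α] (v : β → α) (S : Finset β) (t : β) :
    (insert t S).sup v ≤ v t + S.sup v := by
  rw [sup_insert]
  exact sup_le le_self_add le_add_self

section Position

variable {S : Finset (Fin r)} {s t : Fin r}

theorem taylorPos_le_card_add_one (S : Finset (Fin r)) (t : Fin r) :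
    taylorPos S t ≤ S.card + 1 := by
  have := card_filter_le S (· < t)
  unfold taylorPos; omega

theorem taylorPos_le_card_of_mem (h : s ∈ S) : taylorPos S s ≤ S.card := by
  have := card_lt_card (filter_ssubset.mpr ⟨s, h, lt_irrefl s⟩ : S.filter (· < s) ⊂ S)
  unfold taylorPos; omega

theorem taylorPos_insert_self (S : Finset (Fin r)) (t : Fin r) :
    taylorPos (insert t S) t = taylorPos S t := by
  rw [taylorPos, filter_insert, if_neg (lt_irrefl t), taylorPos]

theorem taylorPos_insert_of_notMem (ht : t ∉ S) :
    taylorPos (insert t S) s = taylorPos S s + if t < s then 1 else 0 := by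
  unfold taylorPos
  rw [filter_insert]
  split
  · rw [card_insert_of_notMem fun hmem => ht (mem_filter.mp hmem).1]
  · simp

theorem taylorPos_erase_add (hs : s ∈ S) :
    taylorPos (S.erase s) t + (if s < t then 1 else 0) = taylorPos S t := by
  unfold taylorPos
  rw [filter_erase]
  split
  case isTrue h =>
    have hmem : s ∈ S.filter (· < t) := mem_filter.mpr ⟨hs, h⟩
    have := card_erase_add_one hmem
    omega
  case isFalse h =>
    have hmem : s ∉ S.filter (· < t) := fun hmem => h (mem_filter.mp hmem).2
    rw [erase_eq_of_notMem hmem, add_zero]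

end Position

section Entries

variable {𝕜} {v : Fin r → (Fin n →₀ ℕ)} {f : Fin r → MvPolynomial (Fin n) 𝕜}
  {S : Finset (Fin r)} {s t : Fin r}

theorem htpyEntry_mul_taylorEntry (S T : Finset (Fin r)) (t s : Fin r) :
    htpyEntry 𝕜 v f S t * taylorEntry 𝕜 v T s =
      (-1) ^ (S.card + taylorPos S t + 1 + (T.card - taylorPos T s)) *
        (f t * monomial
          (v t + S.sup v - (insert t S).sup v + (T.sup v - (T.erase s).sup v)) 1) := by
  have monomial_add_one (A B : Fin n →₀ ℕ) :
      monomial (A + B) (1 : 𝕜) = monomial A 1 * monomial B 1 := by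
    rw [monomial_mul, one_mul]
  rw [htpyEntry, taylorEntry, pow_add, monomial_add_one]
  ring

theorem htpyEntry_mul_taylorEntry_insert_self (ht : t ∉ S) :
    htpyEntry 𝕜 v f S t * taylorEntry 𝕜 v (insert t S) t = f t * monomial (v t) 1 := by
  rw [htpyEntry_mul_taylorEntry, taylorPos_insert_self, card_insert_of_notMem ht,
    erase_insert ht]
  have hsign : Even (S.card + taylorPos S t + 1 + (S.card + 1 - taylorPos S t)) :=
    ⟨S.card + 1, by have := taylorPos_le_card_add_one S t; omega⟩
  rw [hsign.neg_one_pow, one_mul, tsub_add_tsub_cancel (sup_insert_le_add v S t)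
    (sup_mono (subset_insert t S)), add_tsub_cancel_right]

theorem taylorEntry_mul_htpyEntry_erase_self (hs : s ∈ S) :
    taylorEntry 𝕜 v S s * htpyEntry 𝕜 v f (S.erase s) s = f s * monomial (v s) 1 := by
  rw [mul_comm, ← htpyEntry_mul_taylorEntry_insert_self (notMem_erase s S), insert_erase hs]

theorem htpyEntry_mul_taylorEntry_add_taylorEntry_mul_htpyEntry (hs : s ∈ S) (ht : t ∉ S) :
    htpyEntry 𝕜 v f S t * taylorEntry 𝕜 v (insert t S) s +
      taylorEntry 𝕜 v S s * htpyEntry 𝕜 v f (S.erase s) t = 0 := by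
  have hts : t ≠ s := (ne_of_mem_of_not_mem hs ht).symm
  rw [mul_comm (taylorEntry 𝕜 v S s), htpyEntry_mul_taylorEntry, htpyEntry_mul_taylorEntry,
    erase_insert_of_ne hts]
  refine neg_one_pow_mul_add_neg_one_pow_mul_of_odd ?_ ?_
  · have hins := taylorPos_insert_of_notMem (s := s) ht
    have hers := taylorPos_erase_add (t := t) hs
    have := taylorPos_le_card_of_mem hs
    have := card_erase_add_one hs
    rw [card_insert_of_notMem ht, Nat.odd_iff]
    split_ifs at hins hers <;> omega
  · congr 3
    have h₁ := sup_insert_le_add v S t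
    have h₂ := sup_insert_le_add v (S.erase s) t
    have h₃ : (S.erase s).sup v ≤ S.sup v := sup_mono (erase_subset s S)
    have h₄ : (insert t (S.erase s)).sup v ≤ (insert t S).sup v :=
      sup_mono (insert_subset_insert t (erase_subset s S))
    ext i
    have := h₁ i; have := h₂ i; have := h₃ i; have := h₄ i
    simp only [Finsupp.add_apply, Finsupp.tsub_apply] at *
    omega

end Entries

section Homotopy

variable {𝕜} (v : Fin r → (Fin n →₀ ℕ)) (f : Fin r → MvPolynomial (Fin n) 𝕜)

theorem taylorTau_single (S : Finset (Fin r)) (q : MvPolynomial (Fin n) 𝕜) :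
    taylorTau 𝕜 v (Finsupp.single S q) =
      ∑ s ∈ S, Finsupp.single (S.erase s) (q * taylorEntry 𝕜 v S s) := by
  simp only [taylorTau, Finsupp.lsum_single, LinearMap.toSpanSingleton_apply, smul_sum,
    Finsupp.smul_single, smul_eq_mul]

theorem taylorHtpy_single (S : Finset (Fin r)) (q : MvPolynomial (Fin n) 𝕜) :
    taylorHtpy 𝕜 v f (Finsupp.single S q) =
      ∑ t ∈ Sᶜ, Finsupp.single (insert t S) (q * htpyEntry 𝕜 v f S t) := by
  simp only [taylorHtpy, Finsupp.lsum_single, LinearMap.toSpanSingleton_apply, smul_sum,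
    Finsupp.smul_single, smul_eq_mul]

theorem taylorTau_taylorHtpy_single (S : Finset (Fin r)) :
    taylorTau 𝕜 v (taylorHtpy 𝕜 v f (Finsupp.single S 1)) =
      ∑ t ∈ Sᶜ, (Finsupp.single S (f t * monomial (v t) 1) +
        ∑ s ∈ S, Finsupp.single (insert t (S.erase s))
          (htpyEntry 𝕜 v f S t * taylorEntry 𝕜 v (insert t S) s)) := by
  rw [taylorHtpy_single, map_sum]
  refine sum_congr rfl fun t htc => ?_
  have ht : t ∉ S := mem_compl.mp htc
  rw [one_mul, taylorTau_single, sum_insert ht, erase_insert ht,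
    htpyEntry_mul_taylorEntry_insert_self ht]
  congr 1
  refine sum_congr rfl fun s hs => ?_
  rw [erase_insert_of_ne (ne_of_mem_of_not_mem hs ht).symm]

theorem taylorHtpy_taylorTau_single (S : Finset (Fin r)) :
    taylorHtpy 𝕜 v f (taylorTau 𝕜 v (Finsupp.single S 1)) =
      ∑ s ∈ S, (Finsupp.single S (f s * monomial (v s) 1) +
        ∑ t ∈ Sᶜ, Finsupp.single (insert t (S.erase s))
          (taylorEntry 𝕜 v S s * htpyEntry 𝕜 v f (S.erase s) t)) := by
  rw [taylorTau_single, map_sum]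
  refine sum_congr rfl fun s hs => ?_
  rw [one_mul, taylorHtpy_single, compl_erase, sum_insert (notMem_compl.mpr hs), insert_erase hs,
    taylorEntry_mul_htpyEntry_erase_self hs]

theorem taylorTau_taylorHtpy_add_taylorHtpy_taylorTau_single (S : Finset (Fin r)) :
    taylorTau 𝕜 v (taylorHtpy 𝕜 v f (Finsupp.single S 1)) +
      taylorHtpy 𝕜 v f (taylorTau 𝕜 v (Finsupp.single S 1)) =
      Finsupp.single S (∑ t, f t * monomial (v t) 1) := by
  have hcross : (∑ t ∈ Sᶜ, ∑ s ∈ S, Finsupp.single (insert t (S.erase s))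
        (htpyEntry 𝕜 v f S t * taylorEntry 𝕜 v (insert t S) s)) +
      ∑ s ∈ S, ∑ t ∈ Sᶜ, Finsupp.single (insert t (S.erase s))
        (taylorEntry 𝕜 v S s * htpyEntry 𝕜 v f (S.erase s) t) = 0 := by
    rw [sum_comm (s := S), ← sum_add_distrib]
    refine sum_eq_zero fun t ht => ?_
    rw [← sum_add_distrib]
    refine sum_eq_zero fun s hs => ?_
    rw [← Finsupp.single_add,
      htpyEntry_mul_taylorEntry_add_taylorEntry_mul_htpyEntry hs (mem_compl.mp ht),
      Finsupp.single_zero]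
  rw [taylorTau_taylorHtpy_single, taylorHtpy_taylorTau_single, sum_add_distrib, sum_add_distrib,
    add_add_add_comm, hcross, add_zero, add_comm, sum_add_sum_compl, Finsupp.single_finsetSum]

end Homotopy

/-- For every `j ∈ {1,…,c}`, the map `σ_j` is a homotopy for multiplication
by `a_j` on the Taylor complex: for every subset `S ⊆ {1,…,r}`,
`τ(σ_j(ε_S)) + σ_j(τ(ε_S)) = a_j · ε_S`, i.e. `τ ∘ σ_j + σ_j ∘ τ` is multiplication by `a_j`.
Here `m_j = x^{v j}` and `a_i = Σ_j f_{i,j} m_j`. -/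
theorem taylor_htpy_is_homotopy {𝕜 : Type*} [Field 𝕜] {n r c : ℕ}
    (v : Fin r → (Fin n →₀ ℕ)) (a : Fin c → MvPolynomial (Fin n) 𝕜)
    (f : Fin c → Fin r → MvPolynomial (Fin n) 𝕜)
    (ha : ∀ i, a i = ∑ j : Fin r, f i j * monomial (v j) 1) :
    ∀ j : Fin c,
      (∀ S : Finset (Fin r),
        taylorTau 𝕜 v (taylorHtpy 𝕜 v (f j) (Finsupp.single S 1)) +
          taylorHtpy 𝕜 v (f j) (taylorTau 𝕜 v (Finsupp.single S 1)) =
          a j • Finsupp.single S 1) ∧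
      taylorTau 𝕜 v ∘ₗ taylorHtpy 𝕜 v (f j) + taylorHtpy 𝕜 v (f j) ∘ₗ taylorTau 𝕜 v =
        a j • LinearMap.id := by
  intro j
  have hbasis (S : Finset (Fin r)) :
      taylorTau 𝕜 v (taylorHtpy 𝕜 v (f j) (Finsupp.single S 1)) +
        taylorHtpy 𝕜 v (f j) (taylorTau 𝕜 v (Finsupp.single S 1)) =
        a j • Finsupp.single S 1 := by
    rw [taylorTau_taylorHtpy_add_taylorHtpy_taylorTau_single, Finsupp.smul_single_one, ha j]
  exact ⟨hbasis, Finsupp.lhom_ext' fun S => LinearMap.ext_ring (hbasis S)⟩
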